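/- Let R be a commutative noetherian local ring with residue field k. For finitely generated R-modules M and N and n ≥ 0, define V_n(M,N) to be the set of R-linear maps f : M → N such that the induced map Ω^n f : Ω^n M → Ω^n N between n-th syzygies (computed from chosen projective resolutions) factors through a projective module. Then V_n(M,N) is an R-submodule of Hom_R(M,N), and the ascending chain V_0(M,N) ⊆ V_1(M,N) ⊆ ⋯ stabilizes: there exists m ≥ 0 with V_ℓ(M,N) = V_m(M,N) for all ℓ ≥ m. -/

import Mathlib

noncomputable section

/-- A linear map factors through a finitely generated free module
(equivalently, through a projective module, for maps between finitely
generated modules). -/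
def FactorsThruFree (R : Type) [Ring R] {M N : Type} [AddCommGroup M] [Module R M]
    [AddCommGroup N] [Module R N] (f : M →ₗ[R] N) : Prop :=
  ∃ (b : ℕ) (g : (Fin b → R) →ₗ[R] N) (h : M →ₗ[R] (Fin b → R)), f = g ∘ₗ h

/-- `SyzFactors R n f` : an induced map `Ω^n f` between `n`-th syzygies of `M` and `N`
(computed from chosen free covers) factors through a projective (= f.g. free) module. -/
def SyzFactors (R : Type) [Ring R] :
    (n : ℕ) → {M : Type} → [AddCommGroup M] → [Module R M] →
      {N : Type} → [AddCommGroup N] → [Module R N] → (M →ₗ[R] N) → Prop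
  | 0, _M, _, _, _N, _, _, f => FactorsThruFree R f
  | n + 1, _M, _, _, _N, _, _, f =>
      ∃ (a b : ℕ) (p : (Fin a → R) →ₗ[R] _M) (q : (Fin b → R) →ₗ[R] _N)
        (φ : (Fin a → R) →ₗ[R] (Fin b → R)),
        Function.Surjective p ∧ Function.Surjective q ∧
        ∃ hcomm : q ∘ₗ φ = f ∘ₗ p,
          SyzFactors R n (φ.restrict (p := LinearMap.ker p) (q := LinearMap.ker q)
            (fun x hx => by
              have h1 : q (φ x) = f (p x) := LinearMap.congr_fun hcomm x
              rw [LinearMap.mem_ker] at hx ⊢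
              rw [h1, hx, map_zero]))

/-!
A map that factors through a free module lifts, along free covers, to a map vanishing on the
syzygies, so `V_n ⊆ V_(n+1)`. Two lifts of the same map differ, after composing with comparison
maps between the covers, by a map into the syzygy that factors through a free module; hence
whether the restriction to syzygies lies in `V_n` does not depend on the covers, and lifting
along common covers shows by induction on `n` that `V_n` is closed under addition. Finally
`Hom_R(M, N)` is a noetherian module, so the ascending chain of submodules `V_n` stabilizes.
-/

theorem LinearMap.mem_ker_of_comp_eq {R : Type} [Ring R] {M N P Q : Type}
    [AddCommGroup M] [Module R M] [AddCommGroup N] [Module R N]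
    [AddCommGroup P] [Module R P] [AddCommGroup Q] [Module R Q]
    {f : M →ₗ[R] N} {p : P →ₗ[R] M} {q : Q →ₗ[R] N} {φ : P →ₗ[R] Q}
    (hcomm : q ∘ₗ φ = f ∘ₗ p) : ∀ x ∈ LinearMap.ker p, φ x ∈ LinearMap.ker q := by
  intro x hx
  rw [LinearMap.mem_ker] at hx ⊢
  rw [← LinearMap.comp_apply, hcomm, LinearMap.comp_apply, hx, map_zero]

section

variable {R : Type} [Ring R] {M N : Type} [AddCommGroup M] [Module R M]
  [AddCommGroup N] [Module R N]

theorem factorsThruFree_zero : FactorsThruFree R (0 : M →ₗ[R] N) :=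
  ⟨0, 0, 0, rfl⟩

theorem FactorsThruFree.comp {M' N' : Type} [AddCommGroup M'] [Module R M']
    [AddCommGroup N'] [Module R N'] {f : M →ₗ[R] N} (hf : FactorsThruFree R f)
    (u : M' →ₗ[R] M) (v : N →ₗ[R] N') : FactorsThruFree R (v ∘ₗ f ∘ₗ u) := by
  obtain ⟨b, g, h, rfl⟩ := hf
  exact ⟨b, v ∘ₗ g, h ∘ₗ u, rfl⟩

theorem FactorsThruFree.exists_eq_comp {f : M →ₗ[R] N} (hf : FactorsThruFree R f) {b : ℕ}
    {q : (Fin b → R) →ₗ[R] N} (hq : Function.Surjective q) :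
    ∃ h : M →ₗ[R] (Fin b → R), f = q ∘ₗ h := by
  obtain ⟨c, g, h, rfl⟩ := hf
  obtain ⟨g', hg'⟩ := Module.projective_lifting_property q g hq
  exact ⟨g' ∘ₗ h, by rw [← LinearMap.comp_assoc, hg']⟩

theorem FactorsThruFree.add [Module.Finite R N] {f g : M →ₗ[R] N}
    (hf : FactorsThruFree R f) (hg : FactorsThruFree R g) : FactorsThruFree R (f + g) := by
  obtain ⟨b, q, hq⟩ := Module.Finite.exists_fin' R N
  obtain ⟨h₁, rfl⟩ := hf.exists_eq_comp hq
  obtain ⟨h₂, rfl⟩ := hg.exists_eq_comp hq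
  exact ⟨b, q, h₁ + h₂, (LinearMap.comp_add _ _ _).symm⟩

end

section

variable {R : Type} [Ring R] [IsNoetherianRing R]

theorem FactorsThruFree.syzFactors (n : ℕ) {M N : Type} [AddCommGroup M] [Module R M]
    [Module.Finite R M] [AddCommGroup N] [Module R N] [Module.Finite R N]
    {f : M →ₗ[R] N} (hf : FactorsThruFree R f) : SyzFactors R n f := by
  induction n generalizing M N with
  | zero => exact hf
  | succ n ih =>
    obtain ⟨a, p, hp⟩ := Module.Finite.exists_fin' R M
    obtain ⟨b, q, hq⟩ := Module.Finite.exists_fin' R N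
    obtain ⟨h, rfl⟩ := hf.exists_eq_comp hq
    refine ⟨a, b, p, q, h ∘ₗ p, hp, hq, rfl, ?_⟩
    have hzero : (h ∘ₗ p).restrict (LinearMap.mem_ker_of_comp_eq (f := q ∘ₗ h) rfl) = 0 := by
      ext x : 2
      simp [LinearMap.mem_ker.mp x.2]
    rw [hzero]
    exact ih (M := LinearMap.ker p) (N := LinearMap.ker q) factorsThruFree_zero

theorem syzFactors_zero (n : ℕ) (M N : Type) [AddCommGroup M] [Module R M]
    [Module.Finite R M] [AddCommGroup N] [Module R N] [Module.Finite R N] :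
    SyzFactors R n (0 : M →ₗ[R] N) :=
  factorsThruFree_zero.syzFactors n

end

namespace SyzFactors

variable {R : Type}

theorem smul [CommRing R] {n : ℕ} {M N : Type} [AddCommGroup M] [Module R M]
    [AddCommGroup N] [Module R N] {f : M →ₗ[R] N} (hf : SyzFactors R n f) (c : R) :
    SyzFactors R n (c • f) := by
  induction n generalizing M N with
  | zero =>
    obtain ⟨b, g, h, rfl⟩ := hf
    exact ⟨b, c • g, h, rfl⟩
  | succ n ih =>
    obtain ⟨a, b, p, q, φ, hp, hq, hcomm, hres⟩ := hf
    have hcomm' : q ∘ₗ (c • φ) = (c • f) ∘ₗ p := by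
      rw [LinearMap.comp_smul, hcomm, LinearMap.smul_comp]
    exact ⟨a, b, p, q, c • φ, hp, hq, hcomm', ih hres⟩

variable [Ring R] [IsNoetherianRing R]

theorem comp {n : ℕ} {M N M' N' : Type} [AddCommGroup M] [Module R M]
    [AddCommGroup N] [Module R N] [AddCommGroup M'] [Module R M'] [Module.Finite R M']
    [AddCommGroup N'] [Module R N'] [Module.Finite R N'] {f : M →ₗ[R] N}
    (hf : SyzFactors R n f) (u : M' →ₗ[R] M) (v : N →ₗ[R] N') :
    SyzFactors R n (v ∘ₗ f ∘ₗ u) := by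
  induction n generalizing M N M' N' with
  | zero => exact FactorsThruFree.comp hf u v
  | succ n ih =>
    obtain ⟨a, b, p, q, φ, hp, hq, hcomm, hres⟩ := hf
    obtain ⟨a', p', hp'⟩ := Module.Finite.exists_fin' R M'
    obtain ⟨b', q', hq'⟩ := Module.Finite.exists_fin' R N'
    obtain ⟨γ, hγ⟩ := Module.projective_lifting_property p (u ∘ₗ p') hp
    obtain ⟨ε, hε⟩ := Module.projective_lifting_property q' (v ∘ₗ q) hq'
    have hcomm' : q' ∘ₗ (ε ∘ₗ φ ∘ₗ γ) = (v ∘ₗ f ∘ₗ u) ∘ₗ p' := by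
      refine LinearMap.ext fun x => ?_
      calc q' (ε (φ (γ x))) = v (q (φ (γ x))) := LinearMap.congr_fun hε _
        _ = v (f (p (γ x))) := congrArg v (LinearMap.congr_fun hcomm _)
        _ = v (f (u (p' x))) := congrArg (v ∘ f) (LinearMap.congr_fun hγ x)
    refine ⟨a', b', p', q', ε ∘ₗ φ ∘ₗ γ, hp', hq', hcomm', ?_⟩
    exact ih hres (γ.restrict (LinearMap.mem_ker_of_comp_eq hγ))
      (ε.restrict (LinearMap.mem_ker_of_comp_eq hε))

theorem succ {n : ℕ} {M N : Type} [AddCommGroup M] [Module R M] [Module.Finite R M]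
    [AddCommGroup N] [Module R N] [Module.Finite R N] {f : M →ₗ[R] N}
    (hf : SyzFactors R n f) : SyzFactors R (n + 1) f := by
  induction n generalizing M N with
  | zero => exact FactorsThruFree.syzFactors 1 hf
  | succ n ih =>
    obtain ⟨a, b, p, q, φ, hp, hq, hcomm, hres⟩ := hf
    exact ⟨a, b, p, q, φ, hp, hq, hcomm, ih hres⟩

/-- Whether the restriction of a lift to the syzygies lies in `V_n` does not depend on the
covers and the lift. -/
theorem restrict_of_comp_eq {n : ℕ}
    (hadd : ∀ {M N : Type} [AddCommGroup M] [Module R M] [Module.Finite R M]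
      [AddCommGroup N] [Module R N] [Module.Finite R N] {f g : M →ₗ[R] N},
      SyzFactors R n f → SyzFactors R n g → SyzFactors R n (f + g))
    {M N : Type} [AddCommGroup M] [Module R M] [AddCommGroup N] [Module R N]
    {f : M →ₗ[R] N} (hf : SyzFactors R (n + 1) f) {a b : ℕ}
    (p : (Fin a → R) →ₗ[R] M) {q : (Fin b → R) →ₗ[R] N} (hq : Function.Surjective q)
    {φ : (Fin a → R) →ₗ[R] (Fin b → R)} (hcomm : q ∘ₗ φ = f ∘ₗ p) :
    SyzFactors R n (φ.restrict (LinearMap.mem_ker_of_comp_eq hcomm)) := by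
  obtain ⟨a₁, b₁, p₁, q₁, φ₁, hp₁, -, hcomm₁, hres₁⟩ := hf
  obtain ⟨α, hα⟩ := Module.projective_lifting_property p₁ (LinearMap.id ∘ₗ p) hp₁
  obtain ⟨β, hβ⟩ := Module.projective_lifting_property q (LinearMap.id ∘ₗ q₁) hq
  have hδ : ∀ x, (φ - β ∘ₗ φ₁ ∘ₗ α) x ∈ LinearMap.ker q := fun x => by
    rw [LinearMap.mem_ker, LinearMap.sub_apply, map_sub, sub_eq_zero]
    calc q (φ x) = f (p x) := LinearMap.congr_fun hcomm x
      _ = f (p₁ (α x)) := congrArg f (LinearMap.congr_fun hα x).symm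
      _ = q₁ (φ₁ (α x)) := (LinearMap.congr_fun hcomm₁ (α x)).symm
      _ = q (β (φ₁ (α x))) := (LinearMap.congr_fun hβ _).symm
  let δ := LinearMap.codRestrict (LinearMap.ker q) (φ - β ∘ₗ φ₁ ∘ₗ α) hδ
  have hsplit : φ.restrict (LinearMap.mem_ker_of_comp_eq hcomm) =
      β.restrict (LinearMap.mem_ker_of_comp_eq hβ) ∘ₗ φ₁.restrict
        (LinearMap.mem_ker_of_comp_eq hcomm₁) ∘ₗ α.restrict (LinearMap.mem_ker_of_comp_eq hα) +
      δ ∘ₗ (LinearMap.ker p).subtype := by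
    ext x : 2
    simp [δ]
  rw [hsplit]
  exact hadd (hres₁.comp _ _) (FactorsThruFree.syzFactors n ⟨a, δ, _, rfl⟩)

theorem add {n : ℕ} {M N : Type} [AddCommGroup M] [Module R M] [Module.Finite R M]
    [AddCommGroup N] [Module R N] [Module.Finite R N] {f g : M →ₗ[R] N}
    (hf : SyzFactors R n f) (hg : SyzFactors R n g) : SyzFactors R n (f + g) := by
  induction n generalizing M N with
  | zero => exact FactorsThruFree.add hf hg
  | succ n ih =>
    obtain ⟨a, p, hp⟩ := Module.Finite.exists_fin' R M
    obtain ⟨b, q, hq⟩ := Module.Finite.exists_fin' R N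
    obtain ⟨ψ, hψ⟩ := Module.projective_lifting_property q (f ∘ₗ p) hq
    obtain ⟨χ, hχ⟩ := Module.projective_lifting_property q (g ∘ₗ p) hq
    have hcomm : q ∘ₗ (ψ + χ) = (f + g) ∘ₗ p := by
      rw [LinearMap.comp_add, hψ, hχ, LinearMap.add_comp]
    refine ⟨a, b, p, q, ψ + χ, hp, hq, hcomm, ?_⟩
    exact ih (restrict_of_comp_eq ih hf p hq hψ)
      (restrict_of_comp_eq ih hg p hq hχ)

end SyzFactors

/-- `V_n(M, N)`. -/
def syzFactorsSubmodule (R : Type) [CommRing R] [IsNoetherianRing R] (n : ℕ) (M N : Type)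
    [AddCommGroup M] [Module R M] [Module.Finite R M]
    [AddCommGroup N] [Module R N] [Module.Finite R N] : Submodule R (M →ₗ[R] N) where
  carrier := {f | SyzFactors R n f}
  add_mem' := SyzFactors.add
  zero_mem' := syzFactors_zero n M N
  smul_mem' c _ hf := hf.smul c

theorem stmt_8_general (R : Type) [CommRing R] [IsNoetherianRing R]
    (M N : Type) [AddCommGroup M] [Module R M] [Module.Finite R M]
    [AddCommGroup N] [Module R N] [Module.Finite R N] :
    (∀ n : ℕ, ∃ V : Submodule R (M →ₗ[R] N),
        (V : Set (M →ₗ[R] N)) = {f | SyzFactors R n f}) ∧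
    (∀ n : ℕ, {f : M →ₗ[R] N | SyzFactors R n f} ⊆ {f | SyzFactors R (n + 1) f}) ∧
    (∃ m : ℕ, ∀ l : ℕ, m ≤ l →
        {f : M →ₗ[R] N | SyzFactors R l f} = {f | SyzFactors R m f}) := by
  let V n := syzFactorsSubmodule R n M N
  have hV : Monotone V := monotone_nat_of_le_succ fun _ _ hf => SyzFactors.succ hf
  obtain ⟨m, hm⟩ := monotone_stabilizes_iff_noetherian.mpr inferInstance ⟨V, hV⟩
  exact ⟨fun n => ⟨V n, rfl⟩, fun _ _ hf => SyzFactors.succ hf,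
    ⟨m, fun l hl => congrArg SetLike.coe (hm l hl).symm⟩⟩

/-- The sets `V_n(M,N) = {f : M → N | Ω^n f factors through a projective}` are
`R`-submodules of `Hom_R(M,N)`, and the ascending chain `V_0 ⊆ V_1 ⊆ ⋯` stabilizes. -/
theorem stmt_8 (R : Type) [CommRing R] [IsNoetherianRing R] [IsLocalRing R]
    (M N : Type) [AddCommGroup M] [Module R M] [Module.Finite R M]
    [AddCommGroup N] [Module R N] [Module.Finite R N] :
    (∀ n : ℕ, ∃ V : Submodule R (M →ₗ[R] N),
        (V : Set (M →ₗ[R] N)) = {f | SyzFactors R n f}) ∧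
    (∀ n : ℕ, {f : M →ₗ[R] N | SyzFactors R n f} ⊆ {f | SyzFactors R (n + 1) f}) ∧
    (∃ m : ℕ, ∀ l : ℕ, m ≤ l →
        {f : M →ₗ[R] N | SyzFactors R l f} = {f | SyzFactors R m f}) :=
  stmt_8_general R M N
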